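/- For every Turing functional Δ, there exist computable codes R_0 and R_1 for complementary open subsets of (ω)^2 forming a reduced coloring (ω)^2 = R_0 ∪ R_1, such that Δ^{R_0 ⊕ R_1} is not an infinite partition homogeneous for this coloring. Hence no single Turing functional uniformly produces homogeneous partitions for computable clopen reduced 2-colorings of (ω)^2. -/

import Mathlib

open Set

/-- `f : ℕ → ℕ` is ordered: a value `i` can occur only after all `j < i` have occurred. -/
def IsOrderedFn (f : ℕ → ℕ) : Prop :=
  ∀ n i, f n = i → ∀ j < i, ∃ m < n, f m = j

/-- `(ω)^k`: ordered surjections from `ω` onto `k`. -/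
def OmegaPart (k : ℕ) : Set (ℕ → ℕ) :=
  {f | IsOrderedFn f ∧ (∀ n, f n < k) ∧ ∀ i < k, ∃ n, f n = i}

/-- `(ω)^ω`: ordered surjections from `ω` onto `ω` (infinite partitions). -/
def OmegaPartInf : Set (ℕ → ℕ) :=
  {f | IsOrderedFn f ∧ Function.Surjective f}

/-- `(p)^k`: the `k`-coarsenings of `p`. -/
def Coarsenings (p : ℕ → ℕ) (k : ℕ) : Set (ℕ → ℕ) :=
  {q | q ∈ OmegaPart k ∧ ∀ n m, p n = p m → q n = q m}

/-- `(p)^ω`: the infinite coarsenings of `p`. -/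
def CoarseningsInf (p : ℕ → ℕ) : Set (ℕ → ℕ) :=
  {q | q ∈ OmegaPartInf ∧ ∀ n m, p n = p m → q n = q m}

/-- `μ^x(i)`: the least `n` with `x n = i`. -/
noncomputable def mu (x : ℕ → ℕ) (i : ℕ) : ℕ := sInf {n | x n = i}

/-- `x ↾ n` as a finite string. -/
def restrictList (x : ℕ → ℕ) (n : ℕ) : List ℕ := (List.range n).map x

/-- The basic (cylinder) set `[σ]` of functions extending the finite string `σ`. -/
def Cyl (σ : List ℕ) : Set (ℕ → ℕ) := {x | ∀ n < σ.length, x n = σ.getD n 0}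

/-- A finite string is ordered. -/
def ListOrdered (σ : List ℕ) : Prop :=
  ∀ n < σ.length, ∀ j < σ.getD n 0, ∃ m < n, σ.getD m 0 = j

/-- `(ω)^k_fin`: ordered finite strings over `k` in which all `i < k` appear. -/
def OmegaPartFin (k : ℕ) : Set (List ℕ) :=
  {σ | ListOrdered σ ∧ (∀ a ∈ σ, a < k) ∧ ∀ i < k, i ∈ σ}

/-- Composition `σ ∘ τ` of finite strings: `(σ ∘ τ)(n) = σ(τ(n))`. -/
def listComp (σ τ : List ℕ) : List ℕ := τ.map fun n => σ.getD n 0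

/-- `σ'` is a `k`-coarsening of the finite string `τ`. -/
def IsListCoarsening (k : ℕ) (σ' τ : List ℕ) : Prop :=
  σ' ∈ OmegaPartFin k ∧ σ'.length = τ.length ∧
    ∀ n < τ.length, ∀ m < τ.length,
      τ.getD n 0 = τ.getD m 0 → σ'.getD n 0 = σ'.getD m 0

/-- The open set coded by a set `W` of finite strings. -/
def OpenFrom (W : Set (List ℕ)) : Set (ℕ → ℕ) := {x | ∃ σ ∈ W, x ∈ Cyl σ}

/-- Codes for partial recursive functionals with an oracle. -/
inductive OracleCode : Type
  | oracle : OracleCode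
  | zero : OracleCode
  | succ : OracleCode
  | left : OracleCode
  | right : OracleCode
  | pair : OracleCode → OracleCode → OracleCode
  | comp : OracleCode → OracleCode → OracleCode
  | prec : OracleCode → OracleCode → OracleCode
  | rfind' : OracleCode → OracleCode

/-- Evaluation of an oracle code with oracle `g`. -/
def OracleCode.evalo (g : ℕ →. ℕ) : OracleCode → ℕ →. ℕ
  | .oracle => g
  | .zero => fun _ => Part.some 0
  | .succ => fun n => Part.some (n + 1)
  | .left => fun n => Part.some (Nat.unpair n).1
  | .right => fun n => Part.some (Nat.unpair n).2
  | .pair cf cg => fun n => Nat.pair <$> OracleCode.evalo g cf n <*> OracleCode.evalo g cg n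
  | .comp cf cg => fun n => OracleCode.evalo g cg n >>= OracleCode.evalo g cf
  | .prec cf cg =>
      Nat.unpaired fun a n =>
        n.rec (OracleCode.evalo g cf a) fun y IH => do
          let i ← IH
          OracleCode.evalo g cg (Nat.pair a (Nat.pair y i))
  | .rfind' cf =>
      Nat.unpaired fun a m =>
        (Nat.rfind fun n =>
            (fun x => decide (x = 0)) <$> OracleCode.evalo g cf (Nat.pair a (n + m))).map (· + m)

/-- View a total function as a partial function. -/
def toP (f : ℕ → ℕ) : ℕ →. ℕ := fun n => Part.some (f n)

/-- `f` is Turing reducible to `g`. -/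
def TuringReducibleFun (f g : ℕ → ℕ) : Prop :=
  ∃ c : OracleCode, c.evalo (toP g) = toP f

open Classical in
/-- Characteristic function of a set of naturals. -/
noncomputable def chi (A : Set ℕ) : ℕ → ℕ := fun n => if n ∈ A then 1 else 0

/-- A numbering of oracle codes. -/
def OracleCode.encodeC : OracleCode → ℕ
  | .oracle => 0
  | .zero => 1
  | .succ => 2
  | .left => 3
  | .right => 4
  | .pair a b => Nat.pair a.encodeC b.encodeC * 4 + 5
  | .comp a b => Nat.pair a.encodeC b.encodeC * 4 + 6
  | .prec a b => Nat.pair a.encodeC b.encodeC * 4 + 7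
  | .rfind' a => a.encodeC * 4 + 8

/-- The Turing jump of (the characteristic function) `g`. -/
def JumpSet (g : ℕ → ℕ) : Set ℕ :=
  {n | ∃ c : OracleCode, ∃ m, n = Nat.pair c.encodeC m ∧ (c.evalo (toP g) m).Dom}

/-- `∅^{(n)}`: the iterated Turing jump of the empty set. -/
noncomputable def EmptyIter : ℕ → Set ℕ
  | 0 => (∅ : Set ℕ)
  | n + 1 => JumpSet (chi (EmptyIter n))

/-- The clopen set coded by the leaf label `e`: `∅`, `univ`, `[τ_m]`, or its complement. -/
def leafSet (e : ℕ) : Set (ℕ → ℕ) :=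
  if e = 0 then ∅
  else if e = 1 then Set.univ
  else if e % 2 = 0 then Cyl (Denumerable.ofNat (List ℕ) (e / 2 - 1))
  else (Cyl (Denumerable.ofNat (List ℕ) (e / 2 - 1)))ᶜ

/-- Evaluation of a normal-form Borel code of height `m` (alternating ∃/∀ over the
labelling function `f` on tuples, `true` for Σ, `false` for Π). -/
def NFEval : ℕ → Bool → (List ℕ → ℕ) → (ℕ → ℕ) → Prop
  | 0, _, f, x => x ∈ leafSet (f [])
  | m + 1, true, f, x => ∃ t, NFEval m false (fun l => f (t :: l)) x
  | m + 1, false, f, x => ∀ t, NFEval m true (fun l => f (t :: l)) x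

/-- The join `f ⊕ g` of two functions. -/
def joinFun (f g : ℕ → ℕ) : ℕ → ℕ := fun n => if n % 2 = 0 then f (n / 2) else g (n / 2)

/-- The oracle given by a boolean code on finite strings. -/
def codeOracle (c : List ℕ → Bool) : ℕ → ℕ :=
  fun n => cond (c (Denumerable.ofNat (List ℕ) n)) 1 0

/-!
Colour `x ∈ (ω)^2` by a predicate `Q` of `μ^x(1)`; the code `R₀` lists the strings
`σ` in which a `1` occurs and whose first `1` sits at a position in `Q`. Suppose `Δ` computes an
infinite partition `p₀` from the oracle of the all-`1` colouring. By the use principle, the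
first `μ^{p₀}(1) + 1` values of `p₀` are computed from finitely many oracle bits, and the
threshold colouring "colour `0` iff `t ≤ μ^x(1)`" has the same bits for `t` large. If `Δ` then
outputs a partition `p`, it agrees with `p₀` up to `μ^{p₀}(1) < t`, so the block `1` of `p` gives
a coarsening of colour `1`, while the block `t` starts at a position `≥ t` and gives one of
colour `0`.
-/

open Filter Topology

theorem eventually_apply_eq (g : ℕ → ℕ) (n : ℕ) : ∀ᶠ g' in 𝓝 g, g' n = g n := by
  have := (continuous_apply n).tendsto g
  rw [nhds_discrete ℕ, tendsto_pure] at this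
  exact this

theorem Nat.eventually_mem_rfind {α : Type*} {l : Filter α} {p : α → ℕ →. Bool} {a : α}
    (hp : ∀ j b, b ∈ p a j → ∀ᶠ y in l, b ∈ p y j) {k : ℕ} (hk : k ∈ Nat.rfind (p a)) :
    ∀ᶠ y in l, k ∈ Nat.rfind (p y) := by
  obtain ⟨hk, hlt⟩ := Nat.mem_rfind.mp hk
  have hbelow := (eventually_all_finset (Finset.range k)).2 fun j hj =>
    hp j false (hlt (Finset.mem_range.1 hj))
  filter_upwards [hp k true hk, hbelow] with y hk' hlt'
  exact Nat.mem_rfind.mpr ⟨hk', fun hj => hlt' _ (Finset.mem_range.2 hj)⟩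

namespace OracleCode

/-- The use principle: `𝓝 g` is taken in the product topology on Baire space, so a halting
computation is unchanged by any oracle agreeing with `g` on a long enough initial segment. -/
theorem eventually_mem_evalo {g : ℕ → ℕ} (c : OracleCode) :
    ∀ {n x : ℕ}, x ∈ c.evalo (toP g) n → ∀ᶠ g' in 𝓝 g, x ∈ c.evalo (toP g') n := by
  induction c with
  | oracle =>
    intro n x h
    filter_upwards [eventually_apply_eq g n] with g' hg'
    simpa only [evalo, toP, hg'] using h
  | zero | succ | left | right => exact fun h => Eventually.of_forall fun _ => h
  | pair cf cg ihf ihg =>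
    intro n x h
    simp only [evalo, Seq.seq, Part.mem_bind_iff, Part.map_eq_map,
      Part.mem_map_iff] at h ⊢
    obtain ⟨_, ⟨a, ha, rfl⟩, b, hb, rfl⟩ := h
    filter_upwards [ihf ha, ihg hb] with g' ha' hb'
    exact ⟨_, ⟨a, ha', rfl⟩, b, hb', rfl⟩
  | comp cf cg ihf ihg =>
    intro n x h
    obtain ⟨y, hy, hx⟩ := Part.mem_bind_iff.mp h
    filter_upwards [ihg hy, ihf hx] with g' hy' hx'
    exact Part.mem_bind_iff.mpr ⟨y, hy', hx'⟩
  | prec cf cg ihf ihg =>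
    intro n x h
    simp only [evalo, Nat.unpaired] at h ⊢
    generalize n.unpair.2 = k at h ⊢
    induction k generalizing x with
    | zero => exact ihf (n := n.unpair.1) h
    | succ y ih =>
      obtain ⟨i, hi, hx⟩ := Part.mem_bind_iff.mp h
      filter_upwards [ih hi, ihg hx] with g' hi' hx'
      exact Part.mem_bind_iff.mpr ⟨i, hi', hx'⟩
  | rfind' cf ihf =>
    intro n x h
    simp only [evalo, Nat.unpaired, Part.map_eq_map, Part.mem_map_iff] at h ⊢
    obtain ⟨k, hk, rfl⟩ := h
    refine (Nat.eventually_mem_rfind (fun j b hb => ?_) hk).mono fun g' hk' => ⟨k, hk', rfl⟩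
    obtain ⟨v, hv, rfl⟩ := (Part.mem_map_iff _).mp hb
    exact (ihf hv).mono fun g' hv' => Part.mem_map _ hv'

end OracleCode

theorem IsOrderedFn.le_of_apply_eq {p : ℕ → ℕ} (hp : IsOrderedFn p) {n i : ℕ} (h : p n = i) :
    i ≤ n := by
  induction i generalizing n with
  | zero => exact n.zero_le
  | succ j ih =>
    obtain ⟨m, hm, hpm⟩ := hp n (j + 1) h j j.lt_succ_self
    exact (ih hpm).trans_lt hm

theorem IsOrderedFn.apply_zero {p : ℕ → ℕ} (hp : IsOrderedFn p) : p 0 = 0 :=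
  Nat.le_zero.mp (hp.le_of_apply_eq rfl)

section mu

variable {x y : ℕ → ℕ} {i n : ℕ}

theorem mu_eq_iff (h : ∃ n, x n = i) : mu x i = n ↔ x n = i ∧ ∀ m < n, x m ≠ i := by
  constructor
  · rintro rfl
    exact ⟨Nat.sInf_mem h, fun m hm => Nat.notMem_of_lt_sInf (s := {n | x n = i}) hm⟩
  · rintro ⟨hn, hmin⟩
    exact le_antisymm (Nat.sInf_le hn) (not_lt.1 fun hlt => hmin _ hlt (Nat.sInf_mem h))

theorem apply_mu (h : ∃ n, x n = i) : x (mu x i) = i :=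
  ((mu_eq_iff h).1 rfl).1

theorem mu_congr (h : ∃ n, x n = i) (hxy : ∀ k ≤ mu x i, y k = x k) : mu y i = mu x i := by
  obtain ⟨hx, hmin⟩ := (mu_eq_iff h).1 rfl
  have hy : y (mu x i) = i := (hxy _ le_rfl).trans hx
  refine (mu_eq_iff ⟨_, hy⟩).2 ⟨hy, fun m hm => ?_⟩
  rw [hxy m hm.le]
  exact hmin m hm

theorem IsOrderedFn.le_mu (hx : IsOrderedFn x) (h : ∃ n, x n = i) : i ≤ mu x i :=
  hx.le_of_apply_eq (apply_mu h)

end mu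

def blockIndicator (p : ℕ → ℕ) (i : ℕ) : ℕ → ℕ := fun n => if p n = i then 1 else 0

theorem mu_blockIndicator (p : ℕ → ℕ) (i : ℕ) : mu (blockIndicator p i) 1 = mu p i := by
  unfold mu blockIndicator
  congr 1
  ext n
  by_cases h : p n = i <;> simp [h]

theorem blockIndicator_mem_coarsenings {p : ℕ → ℕ} (hp : p ∈ OmegaPartInf) {i : ℕ}
    (hi : i ≠ 0) : blockIndicator p i ∈ Coarsenings p 2 := by
  obtain ⟨hord, hsurj⟩ := hp
  have h0 : blockIndicator p i 0 = 0 := by simp [blockIndicator, hord.apply_zero, hi.symm]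
  have hlt : ∀ n, blockIndicator p i n < 2 := fun n => by
    unfold blockIndicator; split_ifs <;> omega
  refine ⟨⟨fun n j hj j' hj' => ?_, hlt, fun j hj => ?_⟩,
    fun n m h => by simp only [blockIndicator, h]⟩
  · -- necessarily `j = 1` and `j' = 0`, and the value `1` does not occur at `0`
    have hn : n ≠ 0 := by rintro rfl; omega
    exact ⟨0, Nat.pos_of_ne_zero hn, by have := hlt n; omega⟩
  · interval_cases j
    · exact ⟨0, h0⟩
    · exact ⟨mu p i, by simp [blockIndicator, apply_mu (hsurj i)]⟩

theorem mem_cyl_iff_getElem {x : ℕ → ℕ} {σ : List ℕ} :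
    x ∈ Cyl σ ↔ ∀ (n : ℕ) (h : n < σ.length), x n = σ[n] := by
  simp only [Cyl, Set.mem_ofPred_eq]
  exact forall₂_congr fun n h => by rw [List.getD_eq_getElem _ _ h]

theorem mem_cyl_restrictList (x : ℕ → ℕ) (L : ℕ) : x ∈ Cyl (restrictList x L) :=
  mem_cyl_iff_getElem.2 fun n h => by simp [restrictList]

theorem idxOf_eq_mu {x : ℕ → ℕ} {σ : List ℕ} (hx : x ∈ Cyl σ) {a : ℕ} (ha : a ∈ σ) :
    σ.idxOf a = mu x a := by
  have hlt := List.idxOf_lt_length_iff.2 ha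
  rw [mem_cyl_iff_getElem] at hx
  have hxa : x (σ.idxOf a) = a := (hx _ hlt).trans (List.getElem_idxOf hlt)
  refine ((mu_eq_iff ⟨_, hxa⟩).2 ⟨hxa, fun m hm => ?_⟩).symm
  rw [hx m (hm.trans hlt)]
  simpa using List.not_of_lt_findIdx hm

def reducedColoring (Q : ℕ → Bool) (σ : List ℕ) : Bool :=
  decide (σ.idxOf 1 < σ.length) && Q (σ.idxOf 1)

theorem Primrec.reducedColoring {Q : ℕ → Bool} (hQ : Primrec Q) :
    Primrec (reducedColoring Q) := by
  have hidx : Primrec fun σ : List ℕ => σ.idxOf 1 :=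
    Primrec.list_idxOf.comp (Primrec.const 1) Primrec.id
  exact Primrec.and.comp (Primrec.nat_lt.comp hidx Primrec.list_length).decide (hQ.comp hidx)

theorem mem_openFrom_reducedColoring {Q : ℕ → Bool} {x : ℕ → ℕ} (hx : ∃ n, x n = 1) :
    x ∈ OpenFrom {σ | reducedColoring Q σ = true} ↔ Q (mu x 1) = true := by
  simp only [OpenFrom, reducedColoring, Set.mem_ofPred_eq, Bool.and_eq_true, decide_eq_true_eq,
    List.idxOf_lt_length_iff]
  constructor
  · rintro ⟨σ, ⟨h1, hQ⟩, hσ⟩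
    rwa [← idxOf_eq_mu hσ h1]
  · intro hQ
    have h1 : 1 ∈ restrictList x (mu x 1 + 1) :=
      List.mem_map.2 ⟨mu x 1, List.mem_range.2 (mu x 1).lt_succ_self, apply_mu hx⟩
    exact ⟨_, ⟨h1, by rwa [idxOf_eq_mu (mem_cyl_restrictList x _) h1]⟩, mem_cyl_restrictList x _⟩

def reducedOracle (Q : ℕ → Bool) : ℕ → ℕ :=
  joinFun (codeOracle (reducedColoring Q)) (codeOracle (reducedColoring fun i => !Q i))

/-- Each bit of the oracle reads a single value of `Q`. -/
theorem continuous_reducedOracle : Continuous reducedOracle := by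
  refine continuous_pi fun m => ?_
  let σ := Denumerable.ofNat (List ℕ) (m / 2)
  let F : Bool → ℕ := fun b =>
    if m % 2 = 0 then cond (decide (σ.idxOf 1 < σ.length) && b) 1 0
    else cond (decide (σ.idxOf 1 < σ.length) && !b) 1 0
  exact (continuous_of_discreteTopology (f := F)).comp (continuous_apply (σ.idxOf 1))

def IsHomogeneousPartition (Q : ℕ → Bool) (p : ℕ → ℕ) : Prop :=
  p ∈ OmegaPartInf ∧
    (Coarsenings p 2 ⊆ OpenFrom {σ | reducedColoring Q σ = true} ∨
      Coarsenings p 2 ⊆ OpenFrom {σ | reducedColoring (fun i => !Q i) σ = true})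

def threshold (t : ℕ) : ℕ → Bool := fun i => decide (t ≤ i)

theorem tendsto_threshold_atTop : Tendsto threshold atTop (𝓝 fun _ => false) := by
  refine tendsto_pi_nhds.2 fun i => ?_
  rw [nhds_discrete, tendsto_pure]
  filter_upwards [eventually_gt_atTop i] with t ht
  simpa [threshold] using ht

theorem not_isHomogeneousPartition_threshold {p : ℕ → ℕ} {t : ℕ} (hmu : mu p 1 < t) :
    ¬ IsHomogeneousPartition (threshold t) p := by
  rintro ⟨hp, hhom | hhom⟩
  · have hq := blockIndicator_mem_coarsenings hp one_ne_zero
    have h := (mem_openFrom_reducedColoring (hq.1.2.2 1 one_lt_two)).1 (hhom hq)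
    rw [mu_blockIndicator, threshold, decide_eq_true_eq] at h
    exact absurd h (not_le.2 hmu)
  · have hq := blockIndicator_mem_coarsenings hp (Nat.ne_zero_of_lt hmu)
    have h := (mem_openFrom_reducedColoring (hq.1.2.2 1 one_lt_two)).1 (hhom hq)
    rw [mu_blockIndicator, threshold, Bool.not_eq_true', decide_eq_false_iff_not] at h
    exact h (hp.1.le_mu (hp.2 t))

def SolvesReducedColoring (Δ : OracleCode) (Q : ℕ → Bool) : Prop :=
  ∃ p, Δ.evalo (toP (reducedOracle Q)) = toP p ∧ IsHomogeneousPartition Q p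

theorem exists_primrec_not_solvesReducedColoring (Δ : OracleCode) :
    ∃ Q : ℕ → Bool, Primrec Q ∧ ¬ SolvesReducedColoring Δ Q := by
  by_contra! hsolves
  obtain ⟨p₀, hΔ, hp₀, -⟩ := hsolves _ (Primrec.const false)
  have hstable : ∀ᶠ t in atTop, ∀ k ∈ Finset.range (mu p₀ 1 + 1),
      p₀ k ∈ Δ.evalo (toP (reducedOracle (threshold t))) k := by
    refine (eventually_all_finset _).2 fun k _ => ?_
    have hk : p₀ k ∈ Δ.evalo (toP (reducedOracle fun _ => false)) k := by
      rw [hΔ]; exact Part.mem_some _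
    exact (continuous_reducedOracle.tendsto _).comp tendsto_threshold_atTop
      (Δ.eventually_mem_evalo hk)
  obtain ⟨t, hagree, ht⟩ := (hstable.and (eventually_gt_atTop (mu p₀ 1))).exists
  obtain ⟨p, hΔp, hp⟩ :=
    hsolves (threshold t) (Primrec.nat_le.comp (Primrec.const t) Primrec.id).decide
  have hmu : mu p 1 = mu p₀ 1 := mu_congr (hp₀.2 1) fun k hk => by
    have := hagree k (Finset.mem_range.2 (Nat.lt_succ_of_le hk))
    rw [hΔp] at this
    exact Part.mem_some_iff.1 this |>.symm
  exact not_isHomogeneousPartition_threshold (hmu ▸ ht) hp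

/-- no Turing functional uniformly solves computable clopen reduced
2-colorings of `(ω)^2`. -/
theorem stmt12 (Δ : OracleCode) :
    ∃ c0 c1 : List ℕ → Bool, Computable c0 ∧ Computable c1 ∧
      -- the coded open sets are complementary on (ω)^2
      (∀ x ∈ OmegaPart 2,
        (x ∈ OpenFrom {σ | c0 σ = true} ↔ x ∉ OpenFrom {σ | c1 σ = true})) ∧
      -- the coloring is reduced: the color depends only on μ^x(1)
      (∀ x ∈ OmegaPart 2, ∀ y ∈ OmegaPart 2, mu x 1 = mu y 1 →
        (x ∈ OpenFrom {σ | c0 σ = true} ↔ y ∈ OpenFrom {σ | c0 σ = true})) ∧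
      -- Δ^{R0 ⊕ R1} is not an infinite homogeneous partition
      ¬ ∃ p : ℕ → ℕ,
          Δ.evalo (toP (joinFun (codeOracle c0) (codeOracle c1))) = toP p ∧
          p ∈ OmegaPartInf ∧
          (Coarsenings p 2 ⊆ OpenFrom {σ | c0 σ = true} ∨
           Coarsenings p 2 ⊆ OpenFrom {σ | c1 σ = true}) := by
  obtain ⟨Q, hQ, hΔ⟩ := exists_primrec_not_solvesReducedColoring Δ
  refine ⟨_, _, hQ.reducedColoring.to_comp, (Primrec.not.comp hQ).reducedColoring.to_comp,
    fun x hx => ?_, fun x hx y hy hxy => ?_, hΔ⟩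
  · rw [mem_openFrom_reducedColoring (hx.2.2 1 one_lt_two),
      mem_openFrom_reducedColoring (hx.2.2 1 one_lt_two)]
    simp
  · rw [mem_openFrom_reducedColoring (hx.2.2 1 one_lt_two),
      mem_openFrom_reducedColoring (hy.2.2 1 one_lt_two), hxy]
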